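/- arXiv:2102.11775 — 3 statements merged into one kernel-verified Lean document; each statement's English description precedes it below -/
import Mathlib

section
/- Let E be a nonempty finite state space and G an irreducible generator of a continuous-time Markov process on E, and let Π_t = exp(tG). Then there exists a probability distribution α on E (a row vector with nonnegative entries summing to 1) such that for every pair i, j ∈ E, the matrix entry Π_t(i,j) = exp(tG)(i,j) converges to α(j) as t → ∞; in particular the limit is independent of the starting state i. -/
open Matrix Filter Topology

/-- A generator (Q-matrix) on a finite state space: nonnegative off-diagonal
entries and zero row sums. -/
def IsGenerator {E : Type*} [Fintype E] (G : Matrix E E ℝ) : Prop :=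
  (∀ i j, i ≠ j → 0 ≤ G i j) ∧ (∀ i, ∑ j, G i j = 0)

/-- Irreducibility of a generator: any state can be reached from any other
state through a chain with nonvanishing product of matrix entries. -/
def GenIrreducible {E : Type*} [Fintype E] (G : Matrix E E ℝ) : Prop :=
  ∀ i j : E, ∃ N : ℕ, 1 ≤ N ∧ ∃ k : ℕ → E, k 0 = i ∧ k N = j ∧
    ∏ l ∈ Finset.range N, G (k l) (k (l + 1)) ≠ 0

/-!
Shifting the generator by a multiple of the identity makes it entrywise nonnegative, so
`exp (t • G)` is a stochastic matrix for `t ≥ 0`, and irreducibility makes every entry of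
`exp G` positive, say at least `δ > 0`. A stochastic matrix whose entries are all at least `δ`
shrinks the oscillation `max v - min v` of every vector by the factor `1 - δ` (Doeblin). Hence
the maximum of each column of `exp (t • G)` decreases in `t`, its minimum increases, and their
gap tends to zero, so the column converges to a constant vector.
-/

open NormedSpace
open scoped Nat

theorem exists_tendsto_of_monotone_of_antitone {ι : Type*} [SemilatticeSup ι] [Nonempty ι]
    {m M : ι → ℝ} (hm : Monotone m) (hM : Antitone M) (hle : ∀ t, m t ≤ M t)
    (hgap : ∀ ε > 0, ∃ t, M t - m t < ε) :
    ∃ a, Tendsto m atTop (𝓝 a) ∧ Tendsto M atTop (𝓝 a) := by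
  have hbdd : ∀ s t, m s ≤ M t := fun s t =>
    (hm le_sup_left).trans ((hle _).trans (hM le_sup_right))
  obtain ⟨t₀⟩ := ‹Nonempty ι›
  have hm_bdd : BddAbove (Set.range m) := ⟨M t₀, Set.forall_mem_range.2 fun s => hbdd s t₀⟩
  have hM_bdd : BddBelow (Set.range M) := ⟨m t₀, Set.forall_mem_range.2 fun t => hbdd t₀ t⟩
  have hlim : ⨅ t, M t = ⨆ t, m t := by
    refine le_antisymm (le_of_forall_pos_lt_add fun ε hε => ?_)
      (ciSup_le fun s => le_ciInf fun t => hbdd s t)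
    obtain ⟨t, ht⟩ := hgap ε hε
    linarith [ciInf_le hM_bdd t, le_ciSup hm_bdd t]
  refine ⟨_, tendsto_atTop_ciSup hm hm_bdd, ?_⟩
  rw [← hlim]
  exact tendsto_atTop_ciInf hM hM_bdd

namespace Matrix

variable {E : Type*} [Fintype E] [DecidableEq E]

theorem hasSum_exp_apply (A : Matrix E E ℝ) (i j : E) :
    HasSum (fun n : ℕ => (n !⁻¹ : ℝ) * (A ^ n) i j) (exp A i j) := by
  let : NormedRing (Matrix E E ℝ) := Matrix.linftyOpNormedRing
  let : NormedAlgebra ℝ (Matrix E E ℝ) := Matrix.linftyOpNormedAlgebra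
  exact Pi.hasSum.mp (Pi.hasSum.mp (exp_series_hasSum_exp' (𝕂 := ℝ) A) i) j

theorem exp_algebraMap (c : ℝ) : exp (algebraMap ℝ (Matrix E E ℝ) c) = Real.exp c • 1 := by
  let : NormedRing (Matrix E E ℝ) := Matrix.linftyOpNormedRing
  let : NormedAlgebra ℝ (Matrix E E ℝ) := Matrix.linftyOpNormedAlgebra
  rw [← Algebra.algebraMap_eq_smul_one, Real.exp_eq_exp_ℝ]
  -- `exact`, not `rw`: the local normed instances agree with the matrix ones only up to defeq
  exact (algebraMap_exp_comm c).symm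

theorem exp_add_smul_one (A : Matrix E E ℝ) (c : ℝ) :
    exp (A + c • 1) = Real.exp c • exp A := by
  rw [← Algebra.algebraMap_eq_smul_one, exp_add_of_commute _ _ (Algebra.commutes c A).symm,
    exp_algebraMap, mul_smul_one]

theorem exp_add_smul (G : Matrix E E ℝ) (s t : ℝ) :
    exp ((s + t) • G) = exp (s • G) * exp (t • G) := by
  rw [add_smul, exp_add_of_commute _ _ (((Commute.refl G).smul_left s).smul_right t)]

theorem exp_mulVec_of_mulVec_eq_zero {A : Matrix E E ℝ} {v : E → ℝ} (hAv : A *ᵥ v = 0) :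
    exp A *ᵥ v = v := by
  ext i
  have hsum : HasSum (fun n : ℕ => (n !⁻¹ : ℝ) * (A ^ n *ᵥ v) i) ((exp A *ᵥ v) i) := by
    simp only [mulVec, dotProduct, Finset.mul_sum, ← mul_assoc]
    exact hasSum_sum fun j _ => (hasSum_exp_apply A i j).mul_right (v j)
  refine hsum.unique (hasSum_single 0 fun n hn => ?_) |>.trans (by simp)
  obtain ⟨n, rfl⟩ := Nat.exists_eq_succ_of_ne_zero hn
  rw [pow_succ, ← mulVec_mulVec, hAv, mulVec_zero, Pi.zero_apply, mul_zero]

section Nonneg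

variable {A : Matrix E E ℝ}

theorem prod_le_pow_apply (hA : ∀ i j, 0 ≤ A i j) (N : ℕ) (k : ℕ → E) :
    ∏ l ∈ Finset.range N, A (k l) (k (l + 1)) ≤ (A ^ N) (k 0) (k N) := by
  induction N with
  | zero => simp
  | succ N ih =>
    rw [Finset.prod_range_succ, pow_succ, mul_apply]
    calc _ ≤ (A ^ N) (k 0) (k N) * A (k N) (k (N + 1)) := mul_le_mul_of_nonneg_right ih (hA _ _)
      _ ≤ ∑ m, (A ^ N) (k 0) m * A m (k (N + 1)) :=
        Finset.single_le_sum (f := fun m => (A ^ N) (k 0) m * A m (k (N + 1)))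
          (fun m _ => mul_nonneg (pow_apply_nonneg hA N _ _) (hA _ _)) (Finset.mem_univ (k N))

theorem pow_apply_le_exp_apply (hA : ∀ i j, 0 ≤ A i j) (n : ℕ) (i j : E) :
    (n !⁻¹ : ℝ) * (A ^ n) i j ≤ exp A i j :=
  le_hasSum (hasSum_exp_apply A i j) n fun m _ =>
    mul_nonneg (by positivity) (pow_apply_nonneg hA m i j)

theorem exists_add_smul_one_nonneg (hA : ∀ i j, i ≠ j → 0 ≤ A i j) :
    ∃ c : ℝ, (∀ i j, 0 ≤ (A + c • 1) i j) ∧ ∀ i j, A i j ≠ 0 → 0 < (A + c • 1) i j := by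
  obtain ⟨b, hb⟩ := (Set.finite_range fun i => -A i i).bddAbove
  have hdiag : ∀ i, 0 < A i i + (b + 1) := fun i => by
    linarith [hb (Set.mem_range_self i)]
  have hentry : ∀ i j,
      (A + (b + 1) • 1) i j = if i = j then A i i + (b + 1) else A i j := by
    intro i j
    split_ifs with h <;> simp [h]
  refine ⟨b + 1, fun i j => ?_, fun i j hij => ?_⟩ <;> rw [hentry] <;> split_ifs with h
  · exact (hdiag i).le
  · exact hA i j h
  · exact hdiag i
  · exact (hA i j h).lt_of_ne' hij

theorem exp_apply_nonneg (hA : ∀ i j, i ≠ j → 0 ≤ A i j) (i j : E) : 0 ≤ exp A i j := by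
  obtain ⟨c, hc, -⟩ := exists_add_smul_one_nonneg hA
  have h : 0 ≤ exp (A + c • 1) i j := HasSum.nonneg
    (fun n => mul_nonneg (by positivity) (pow_apply_nonneg hc n i j)) (hasSum_exp_apply _ i j)
  rw [exp_add_smul_one, smul_apply, smul_eq_mul] at h
  exact nonneg_of_mul_nonneg_right h (Real.exp_pos c)

theorem exp_apply_pos_of_prod_ne_zero (hA : ∀ i j, i ≠ j → 0 ≤ A i j) {N : ℕ} (k : ℕ → E)
    (hk : ∏ l ∈ Finset.range N, A (k l) (k (l + 1)) ≠ 0) : 0 < exp A (k 0) (k N) := by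
  obtain ⟨c, hc, hpos⟩ := exists_add_smul_one_nonneg hA
  have hprod : 0 < ∏ l ∈ Finset.range N, (A + c • 1) (k l) (k (l + 1)) :=
    Finset.prod_pos fun l hl => hpos _ _ (Finset.prod_ne_zero_iff.mp hk l hl)
  have h := (mul_pos (by positivity) (hprod.trans_le (prod_le_pow_apply hc N k))).trans_le
    (pow_apply_le_exp_apply hc N (k 0) (k N))
  rw [exp_add_smul_one, smul_apply, smul_eq_mul] at h
  exact pos_of_mul_pos_right h (Real.exp_pos c).le

end Nonneg

section Stochastic

variable {P : Matrix E E ℝ}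

theorem mulVec_apply_le_of_forall_le (hP : P ∈ rowStochastic ℝ E) {δ b : ℝ} {v : E → ℝ}
    {i : E} (hδ : ∀ l, δ ≤ P i l) (hv : ∀ l, v l ≤ b) (k : E) :
    (P *ᵥ v) i ≤ b - δ * (b - v k) := by
  have hsum : ∑ l, P i l * (b - v l) = b - (P *ᵥ v) i := by
    simp [mulVec, dotProduct, mul_sub, Finset.sum_sub_distrib, ← Finset.sum_mul,
      sum_row_of_mem_rowStochastic hP i]
  have hk : δ * (b - v k) ≤ ∑ l, P i l * (b - v l) :=
    (mul_le_mul_of_nonneg_right (hδ k) (sub_nonneg.2 (hv k))).trans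
      (Finset.single_le_sum (fun l _ => mul_nonneg (hP.1 i l) (sub_nonneg.2 (hv l)))
        (Finset.mem_univ k))
  linarith

theorem le_mulVec_apply_of_forall_le (hP : P ∈ rowStochastic ℝ E) {a : ℝ} {v : E → ℝ}
    (hv : ∀ l, a ≤ v l) (i : E) : a ≤ (P *ᵥ v) i := by
  simpa [mulVec_neg] using mulVec_apply_le_of_forall_le hP (δ := 0) (v := -v) (b := -a)
    (fun l => hP.1 i l) (fun l => neg_le_neg (hv l)) i

variable [Nonempty E]

theorem iSup_mulVec_le (hP : P ∈ rowStochastic ℝ E) (v : E → ℝ) :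
    ⨆ i, (P *ᵥ v) i ≤ ⨆ i, v i :=
  ciSup_le fun i => by
    simpa using mulVec_apply_le_of_forall_le hP (δ := 0) (fun l => hP.1 i l)
      (fun l => le_ciSup (Finite.bddAbove_range v) l) i

theorem iInf_le_iInf_mulVec (hP : P ∈ rowStochastic ℝ E) (v : E → ℝ) :
    ⨅ i, v i ≤ ⨅ i, (P *ᵥ v) i :=
  le_ciInf (le_mulVec_apply_of_forall_le hP fun l => ciInf_le (Finite.bddBelow_range v) l)

theorem iSup_mulVec_sub_iInf_mulVec_le (hP : P ∈ rowStochastic ℝ E) {δ : ℝ}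
    (hδ : ∀ i l, δ ≤ P i l) (v : E → ℝ) :
    (⨆ i, (P *ᵥ v) i) - ⨅ i, (P *ᵥ v) i ≤ (1 - δ) * ((⨆ i, v i) - ⨅ i, v i) := by
  obtain ⟨k, hk⟩ := exists_eq_ciInf_of_finite (f := v)
  have hsup : ⨆ i, (P *ᵥ v) i ≤ (⨆ i, v i) - δ * ((⨆ i, v i) - v k) :=
    ciSup_le fun i => mulVec_apply_le_of_forall_le hP (hδ i)
      (fun l => le_ciSup (Finite.bddAbove_range v) l) k
  rw [hk] at hsup
  linarith [iInf_le_iInf_mulVec hP v]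

end Stochastic

section Semigroup

variable [Nonempty E] {P : ℝ → Matrix E E ℝ}

theorem antitone_iSup_mulVec_of_semigroup (hadd : ∀ s t, P (s + t) = P s * P t)
    (hP : ∀ t, 0 ≤ t → P t ∈ rowStochastic ℝ E) (v : E → ℝ) :
    Antitone fun t => ⨆ i, (P t *ᵥ v) i := fun s t hst => by
  have hsplit : P t = P (t - s) * P s := by rw [← hadd, sub_add_cancel]
  dsimp only
  rw [hsplit, ← mulVec_mulVec]
  exact iSup_mulVec_le (hP _ (sub_nonneg.2 hst)) _

theorem monotone_iInf_mulVec_of_semigroup (hadd : ∀ s t, P (s + t) = P s * P t)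
    (hP : ∀ t, 0 ≤ t → P t ∈ rowStochastic ℝ E) (v : E → ℝ) :
    Monotone fun t => ⨅ i, (P t *ᵥ v) i := fun s t hst => by
  have hsplit : P t = P (t - s) * P s := by rw [← hadd, sub_add_cancel]
  dsimp only
  rw [hsplit, ← mulVec_mulVec]
  exact iInf_le_iInf_mulVec (hP _ (sub_nonneg.2 hst)) _

theorem exists_tendsto_mulVec_of_semigroup (hadd : ∀ s t, P (s + t) = P s * P t)
    (hP : ∀ t, 0 ≤ t → P t ∈ rowStochastic ℝ E) (hpos : ∀ i j, 0 < P 1 i j) (v : E → ℝ) :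
    ∃ a, ∀ i, Tendsto (fun t => (P t *ᵥ v) i) atTop (𝓝 a) := by
  obtain ⟨⟨i₀, j₀⟩, hδ⟩ := Finite.exists_min fun p : E × E => P 1 p.1 p.2
  set δ := P 1 i₀ j₀
  have hδ1 : δ ≤ 1 := le_one_of_mem_rowStochastic (hP 1 zero_le_one)
  set M : ℝ → ℝ := fun t => ⨆ i, (P t *ᵥ v) i
  set m : ℝ → ℝ := fun t => ⨅ i, (P t *ᵥ v) i
  have hle_M : ∀ t i, (P t *ᵥ v) i ≤ M t := fun t => le_ciSup (Finite.bddAbove_range _)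
  have hm_le : ∀ t i, m t ≤ (P t *ᵥ v) i := fun t => ciInf_le (Finite.bddBelow_range _)
  have hdecay : ∀ n : ℕ, M n - m n ≤ (1 - δ) ^ n * (M 0 - m 0) := by
    intro n
    induction n with
    | zero => simp
    | succ n ih =>
      calc M (n + 1 : ℕ) - m (n + 1 : ℕ) ≤ (1 - δ) * (M n - m n) := by
            simp only [M, m, Nat.cast_succ, add_comm (n : ℝ) 1, hadd, ← mulVec_mulVec]
            exact iSup_mulVec_sub_iInf_mulVec_le (hP 1 zero_le_one) (fun i l => hδ (i, l)) _
        _ ≤ (1 - δ) * ((1 - δ) ^ n * (M 0 - m 0)) :=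
            mul_le_mul_of_nonneg_left ih (sub_nonneg.2 hδ1)
        _ = (1 - δ) ^ (n + 1) * (M 0 - m 0) := by ring
  have hgap : ∀ ε > 0, ∃ t, M t - m t < ε := fun ε hε => by
    have h := (tendsto_pow_atTop_nhds_zero_of_lt_one (sub_nonneg.2 hδ1)
      (sub_lt_self 1 (hpos i₀ j₀))).mul_const (M 0 - m 0)
    rw [zero_mul] at h
    obtain ⟨n, hn⟩ := (h.eventually (gt_mem_nhds hε)).exists
    exact ⟨n, (hdecay n).trans_lt hn⟩
  obtain ⟨a, hma, hMa⟩ := exists_tendsto_of_monotone_of_antitone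
    (monotone_iInf_mulVec_of_semigroup hadd hP v) (antitone_iSup_mulVec_of_semigroup hadd hP v)
    (fun t => (hm_le t (Classical.arbitrary E)).trans (hle_M t _)) hgap
  exact ⟨a, fun i => tendsto_of_tendsto_of_tendsto_of_le_of_le hma hMa
    (fun t => hm_le t i) (fun t => hle_M t i)⟩

end Semigroup

end Matrix

section Generator

variable {E : Type*} [Fintype E] [DecidableEq E] {G : Matrix E E ℝ}

theorem IsGenerator.exp_smul_mem_rowStochastic (hG : IsGenerator G) {t : ℝ} (ht : 0 ≤ t) :
    exp (t • G) ∈ rowStochastic ℝ E := by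
  refine ⟨exp_apply_nonneg fun i j hij => mul_nonneg ht (hG.1 i j hij),
    exp_mulVec_of_mulVec_eq_zero ?_⟩
  ext i
  simp [mulVec, dotProduct, ← Finset.mul_sum, hG.2 i]

theorem IsGenerator.exp_smul_apply_pos (hG : IsGenerator G) (hirr : GenIrreducible G) {t : ℝ}
    (ht : 0 < t) (i j : E) : 0 < exp (t • G) i j := by
  obtain ⟨N, -, k, rfl, rfl, hk⟩ := hirr i j
  refine exp_apply_pos_of_prod_ne_zero (fun i j hij => mul_nonneg ht.le (hG.1 i j hij)) k ?_
  simpa [Finset.prod_mul_distrib, ht.ne'] using hk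

end Generator

/-- Ergodic theorem: for an irreducible generator on a nonempty finite state
space, the entries of `exp (t • G)` converge, as `t → ∞`, to a probability
distribution `α` independently of the starting state. -/
theorem ergodic_limit_exists {E : Type*} [Fintype E] [DecidableEq E] [Nonempty E]
    (G : Matrix E E ℝ) (hG : IsGenerator G) (hirr : GenIrreducible G) :
    ∃ α : E → ℝ, (∀ j, 0 ≤ α j) ∧ (∑ j, α j = 1) ∧
      ∀ i j : E, Tendsto (fun t : ℝ => NormedSpace.exp (t • G) i j) atTop (𝓝 (α j)) := by
  have hP : ∀ t : ℝ, 0 ≤ t → exp (t • G) ∈ rowStochastic ℝ E := fun t =>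
    hG.exp_smul_mem_rowStochastic
  have hconv : ∀ j, ∃ a, ∀ i, Tendsto (fun t : ℝ => exp (t • G) i j) atTop (𝓝 a) :=
    fun j => by
      simpa [mulVec_single_one] using exists_tendsto_mulVec_of_semigroup (exp_add_smul G) hP
        (hG.exp_smul_apply_pos hirr one_pos) (Pi.single j 1)
  choose α hα using hconv
  obtain ⟨i⟩ := ‹Nonempty E›
  refine ⟨α, fun j => ge_of_tendsto (hα j i) ?_,
    tendsto_nhds_unique (tendsto_finsetSum _ fun j _ => hα j i) ?_, fun i j => hα j i⟩
  · filter_upwards [eventually_ge_atTop 0] with t ht using (hP t ht).1 i j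
  · exact tendsto_const_nhds.congr' <| (eventually_ge_atTop 0).mono fun t ht =>
      (sum_row_of_mem_rowStochastic (hP t ht) i).symm
end

section
/- Let E be a nonempty finite state space and G an irreducible generator on E. If α is the probability distribution on E such that exp(tG)(i,j) → α(j) as t → ∞ for every i, j ∈ E, then α is stationary: the row vector α satisfies α G = 0, i.e. ∑_{i∈E} α(i) G(i,j) = 0 for every j ∈ E. -/
/-!
By the semigroup law `exp ((t + s) • G) = exp (t • G) * exp (s • G)`, the `i`-th row of the left
side is the `i`-th row of `exp (t • G)` times `exp (s • G)`. Letting `t → ∞` both sides converge,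
to `α` and to `α ᵥ* exp (s • G)` respectively, so `α` is invariant under every `exp (s • G)`.
Differentiating `s ↦ α ᵥ* exp (s • G)` at `s = 0` gives `α ᵥ* G = 0`.
-/

open Matrix Filter Topology

theorem Matrix.vecMul_eq_of_tendsto_row {E : Type*} [Fintype E] {P : ℝ → Matrix E E ℝ}
    (hP : ∀ t s, P (t + s) = P t * P s) {i : E} {α : E → ℝ}
    (hlim : Tendsto (fun t => P t i) atTop (𝓝 α)) (s : ℝ) : α ᵥ* P s = α := by
  have hshift : Tendsto (fun t => P (t + s) i) atTop (𝓝 α) :=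
    hlim.comp (tendsto_atTop_add_const_right _ s tendsto_id)
  have hmul : Tendsto (fun t => P t i ᵥ* P s) atTop (𝓝 (α ᵥ* P s)) :=
    ((continuous_id.matrix_vecMul continuous_const).tendsto α).comp hlim
  simp only [hP, mul_apply_eq_vecMul] at hshift
  exact tendsto_nhds_unique hmul hshift

section

-- Any normed-algebra structure on matrices would do: the statement below is norm-free.
attribute [local instance] Matrix.linftyOpNormedRing Matrix.linftyOpNormedAlgebra

theorem Matrix.hasDerivAt_vecMul_exp_smul {E : Type*} [Fintype E] [DecidableEq E]
    (v : E → ℝ) (G : Matrix E E ℝ) (s : ℝ) :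
    HasDerivAt (fun u : ℝ => v ᵥ* NormedSpace.exp (u • G))
      (v ᵥ* (NormedSpace.exp (s • G) * G)) s :=
  (LinearMap.toContinuousLinearMap (vecMulBilin ℝ ℝ v)).hasFDerivAt.comp_hasDerivAt
    (f := fun u : ℝ => NormedSpace.exp (u • G)) s (hasDerivAt_exp_smul_const G s)

end

theorem Matrix.vecMul_eq_zero_of_vecMul_exp_smul_eq {E : Type*} [Fintype E] [DecidableEq E]
    {v : E → ℝ} {G : Matrix E E ℝ} (h : ∀ s : ℝ, v ᵥ* NormedSpace.exp (s • G) = v) :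
    v ᵥ* G = 0 := by
  have hderiv := hasDerivAt_vecMul_exp_smul v G 0
  rw [funext h, zero_smul, NormedSpace.exp_zero, one_mul] at hderiv
  exact hderiv.unique (hasDerivAt_const 0 v)

theorem ergodic_limit_is_stationary_general {E : Type*} [Fintype E] [DecidableEq E]
    (G : Matrix E E ℝ) (α : E → ℝ)
    (hlim : ∀ i j : E, Tendsto (fun t : ℝ => NormedSpace.exp (t • G) i j) atTop (𝓝 (α j))) :
    ∀ j : E, ∑ i, α i * G i j = 0 := by
  intro j
  have hexp_add (t s : ℝ) :
      NormedSpace.exp ((t + s) • G) = NormedSpace.exp (t • G) * NormedSpace.exp (s • G) := by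
    rw [add_smul, exp_add_of_commute _ _ (((Commute.refl G).smul_left t).smul_right s)]
  have hstationary : ∀ s : ℝ, α ᵥ* NormedSpace.exp (s • G) = α :=
    vecMul_eq_of_tendsto_row hexp_add (tendsto_pi_nhds.2 (hlim j))
  exact congrFun (vecMul_eq_zero_of_vecMul_exp_smul_eq hstationary) j

/-- If `α` is a probability distribution which is the limit of `exp (t • G)` for an
irreducible generator `G`, then `α` is stationary: `α G = 0` as a row vector. -/
theorem ergodic_limit_is_stationary {E : Type*} [Fintype E] [DecidableEq E] [Nonempty E]
    (G : Matrix E E ℝ) (hG : IsGenerator G) (hirr : GenIrreducible G)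
    (α : E → ℝ) (hα₀ : ∀ j, 0 ≤ α j) (hα₁ : ∑ j, α j = 1)
    (hlim : ∀ i j : E, Tendsto (fun t : ℝ => NormedSpace.exp (t • G) i j) atTop (𝓝 (α j))) :
    ∀ j : E, ∑ i, α i * G i j = 0 :=
  ergodic_limit_is_stationary_general G α hlim
end

section
/- Let E be a nonempty finite state space and G an irreducible generator on E. Then the stationary probability distribution is unique: if α and β are two probability distributions on E with α G = 0 and β G = 0 (as row vectors), then α = β. -/
open Matrix Filter Topology

/-!
Put `γ = α - β`, so that `γ G = 0` and `∑ γ = 0`. Summing `γ G` over the columns in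
`S = {γ < 0}` gives `∑ₖ γₖ ∑_{l ∈ S} G k l = 0`, a sum of nonnegative terms; hence no rate
flows from `S` to its complement. By irreducibility `S` is empty or everything, and `∑ γ = 0`
rules out the latter, so `γ ≥ 0` with zero sum, i.e. `γ = 0`.
-/

section

variable {E : Type*} [Fintype E] {G : Matrix E E ℝ}

theorem GenIrreducible.mem_of_closed (hirr : GenIrreducible G) {S : Set E}
    (hS : ∀ i j, i ∈ S → G i j ≠ 0 → j ∈ S) {i : E} (hi : i ∈ S) (j : E) : j ∈ S := by
  obtain ⟨N, -, k, rfl, rfl, hprod⟩ := hirr i j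
  induction N with
  | zero => exact hi
  | succ N ih =>
    rw [Finset.prod_range_succ] at hprod
    exact hS _ _ (ih (left_ne_zero_of_mul hprod)) (right_ne_zero_of_mul hprod)

namespace IsGenerator

theorem sum_nonneg_of_notMem (hG : IsGenerator G) {T : Finset E} {i : E} (hi : i ∉ T) :
    0 ≤ ∑ j ∈ T, G i j :=
  Finset.sum_nonneg fun j hj => hG.1 i j (ne_of_mem_of_not_mem hj hi).symm

theorem apply_eq_zero_of_vecMul_eq_zero (hG : IsGenerator G) {γ : E → ℝ} (hγ : γ ᵥ* G = 0)
    {i j : E} (hi : γ i < 0) (hj : 0 ≤ γ j) : G i j = 0 := by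
  classical
  set S := Finset.univ.filter (γ · < 0)
  have hout : ∀ k, ∑ l ∈ S, G k l = -∑ l ∈ Sᶜ, G k l := fun k =>
    eq_neg_of_add_eq_zero_left ((Finset.sum_add_sum_compl S _).trans (hG.2 k))
  have hflux : ∑ k, γ k * ∑ l ∈ S, G k l = 0 := by
    simp_rw [Finset.mul_sum]
    rw [Finset.sum_comm]
    exact Finset.sum_eq_zero fun l _ => congrFun hγ l
  have hterm : ∀ k, 0 ≤ γ k * ∑ l ∈ S, G k l := by
    intro k
    by_cases hk : γ k < 0
    · rw [hout k]
      exact mul_nonneg_of_nonpos_of_nonpos hk.le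
        (neg_nonpos.2 (hG.sum_nonneg_of_notMem (by simpa [S] using hk)))
    · exact mul_nonneg (not_lt.1 hk) (hG.sum_nonneg_of_notMem (by simpa [S] using hk))
  have hi_out : ∑ l ∈ Sᶜ, G i l = 0 := by
    have := (Finset.sum_eq_zero_iff_of_nonneg fun k _ => hterm k).1 hflux i (Finset.mem_univ _)
    rw [hout i] at this
    simpa [hi.ne] using this
  exact (Finset.sum_eq_zero_iff_of_nonneg fun l hl => hG.1 i l (ne_of_mem_of_not_mem
    (by simpa [S] using hi) (Finset.mem_compl.1 hl))).1 hi_out j (by simpa [S] using hj)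

theorem nonneg_of_vecMul_eq_zero (hG : IsGenerator G) (hirr : GenIrreducible G) {γ : E → ℝ}
    (hγ : γ ᵥ* G = 0) (hsum : 0 ≤ ∑ j, γ j) (j : E) : 0 ≤ γ j := by
  by_contra! hj
  have hneg : ∀ k, γ k < 0 := hirr.mem_of_closed (S := {k | γ k < 0})
    (fun i k hi hik => lt_of_not_ge fun hk => hik (hG.apply_eq_zero_of_vecMul_eq_zero hγ hi hk)) hj
  exact (Finset.sum_neg (fun k _ => hneg k) ⟨j, Finset.mem_univ _⟩).not_ge hsum

theorem eq_zero_of_vecMul_eq_zero (hG : IsGenerator G) (hirr : GenIrreducible G) {γ : E → ℝ}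
    (hγ : γ ᵥ* G = 0) (hsum : ∑ j, γ j = 0) : γ = 0 :=
  funext fun j => (Finset.sum_eq_zero_iff_of_nonneg
    fun k _ => hG.nonneg_of_vecMul_eq_zero hirr hγ hsum.ge k).1 hsum j (Finset.mem_univ j)

end IsGenerator

end

theorem stationary_distribution_unique_general {E : Type*} [Fintype E]
    (G : Matrix E E ℝ) (hG : IsGenerator G) (hirr : GenIrreducible G)
    (α β : E → ℝ)
    (hα₁ : ∑ j, α j = 1) (hα : ∀ j, ∑ i, α i * G i j = 0)
    (hβ₁ : ∑ j, β j = 1) (hβ : ∀ j, ∑ i, β i * G i j = 0) :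
    α = β := by
  have hγ : (α - β) ᵥ* G = 0 := by
    rw [sub_vecMul, show α ᵥ* G = 0 from funext hα, show β ᵥ* G = 0 from funext hβ, sub_zero]
  have hsum : ∑ j, (α - β) j = 0 := by
    simp only [Pi.sub_apply, Finset.sum_sub_distrib, hα₁, hβ₁, sub_self]
  exact sub_eq_zero.1 (hG.eq_zero_of_vecMul_eq_zero hirr hγ hsum)

/-- For an irreducible generator on a nonempty finite state space, the stationary
probability distribution is unique. -/
theorem stationary_distribution_unique {E : Type*} [Fintype E] [DecidableEq E] [Nonempty E]
    (G : Matrix E E ℝ) (hG : IsGenerator G) (hirr : GenIrreducible G)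
    (α β : E → ℝ)
    (hα₀ : ∀ j, 0 ≤ α j) (hα₁ : ∑ j, α j = 1) (hα : ∀ j, ∑ i, α i * G i j = 0)
    (hβ₀ : ∀ j, 0 ≤ β j) (hβ₁ : ∑ j, β j = 1) (hβ : ∀ j, ∑ i, β i * G i j = 0) :
    α = β :=
  stationary_distribution_unique_general G hG hirr α β hα₁ hα hβ₁ hβ
end
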